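/- arXiv:1710.03896 — 3 statements merged into one kernel-verified Lean document; each statement's English description precedes it below -/
import Mathlib

section
/- For every n \geq 1 and every position 1 \leq i \leq 2n-1, the number of matchings \pi \in S_{2n} with a descent at position i (i.e. \pi(i) > \pi(i+1)) equals \frac{n}{2n-1} (2n-1)!!, i.e. n \cdot (2n-3)!!. -/
open Finset

/-- A matching (fixed point free involution). -/
def IsMatching {m : ℕ} (π : Equiv.Perm (Fin m)) : Prop :=
  π * π = 1 ∧ ∀ i, π i ≠ i

instance {m : ℕ} (π : Equiv.Perm (Fin m)) : Decidable (IsMatching π) := by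
  unfold IsMatching; infer_instance

/-- The set of matchings in `S_{2n}`. -/
def matchings (n : ℕ) : Finset (Equiv.Perm (Fin (2 * n))) :=
  Finset.univ.filter IsMatching

/-- Descent set (0-based indices `i` with `π i > π (i+1)`). -/
def desSet {m : ℕ} (π : Equiv.Perm (Fin m)) : Finset (Fin m) :=
  Finset.univ.filter fun i =>
    if h : (i : ℕ) + 1 < m then π ⟨(i : ℕ) + 1, h⟩ < π i else False

/-- Descent number `d(π) = |Des(π)| + 1`. -/
def desNum {m : ℕ} (π : Equiv.Perm (Fin m)) : ℕ := (desSet π).card + 1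

/-- Major index: sum of the (1-based) descent positions. -/
def maj {m : ℕ} (π : Equiv.Perm (Fin m)) : ℕ := ∑ i ∈ desSet π, ((i : ℕ) + 1)

/-- The double factorial `(2n-1)!! = ∏_{i=1}^n (2i-1)`. -/
def doubleFac (n : ℕ) : ℕ := ∏ i ∈ Finset.range n, (2 * i + 1)

/-!
Conjugation by the transposition `(a b)`, `a < b`, maps matchings to matchings. It fixes a
matching `π` exactly when `π a = b` (and then `π` has a descent at `(a, b)`); otherwise it exchanges
the values `π a` and `π b`, hence exchanges descents and ascents at `(a, b)`. So twice the number
of descents is `(2n-1)!!` plus the number `(2n-3)!!` of matchings pairing `a` with `b`, which is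
`2n (2n-3)!!`. Both counts come from sorting matchings by the partner of a fixed point: each of
the `2n - 1` fibres is in bijection with the matchings of the remaining `2n - 2` points.
-/

theorem doubleFac_succ (n : ℕ) : doubleFac (n + 1) = (2 * n + 1) * doubleFac n := by
  rw [doubleFac, prod_range_succ, mul_comm]
  rfl

theorem Fintype.card_subtype_ne_and_ne {α : Type*} [Fintype α] [DecidableEq α] {a b : α}
    (hab : a ≠ b) : Fintype.card {x // x ≠ a ∧ x ≠ b} = Fintype.card α - 2 := by
  rw [Fintype.card_congr (Equiv.subtypeEquivRight fun x => not_or.symm),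
    Fintype.card_subtype_compl, Fintype.card_subtype_eq_or_eq_of_ne hab]

namespace Equiv.Perm

variable {α : Type*}

def IsFixedPointFreeInvolution (π : Perm α) : Prop :=
  π * π = 1 ∧ ∀ x, π x ≠ x

namespace IsFixedPointFreeInvolution

variable {π : Perm α}

theorem apply_apply (h : π.IsFixedPointFreeInvolution) (x : α) : π (π x) = x :=
  congrArg (· x) h.1

theorem apply_eq_comm (h : π.IsFixedPointFreeInvolution) {x y : α} : π x = y ↔ π y = x :=
  ⟨fun hxy => hxy ▸ h.apply_apply x, fun hyx => hyx ▸ h.apply_apply y⟩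

theorem conj (h : π.IsFixedPointFreeInvolution) (σ : Perm α) :
    (σ * π * σ⁻¹).IsFixedPointFreeInvolution := by
  refine ⟨?_, fun x hx => h.2 (σ⁻¹ x) ?_⟩
  · calc σ * π * σ⁻¹ * (σ * π * σ⁻¹) = σ * (π * π) * σ⁻¹ := by group
      _ = 1 := by rw [h.1, mul_one, mul_inv_cancel]
  · simpa [eq_inv_iff_eq] using congrArg (⇑σ⁻¹) hx

variable [DecidableEq α] {a b : α}

theorem swap_conj (h : π.IsFixedPointFreeInvolution) (a b : α) :
    (swap a b * π * swap a b).IsFixedPointFreeInvolution := by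
  simpa using h.conj (swap a b)

theorem swap_conj_apply_left (h : π.IsFixedPointFreeInvolution) (hne : π a ≠ b) :
    (swap a b * π * swap a b) a = π b := by
  rw [mul_apply, mul_apply, swap_apply_left]
  exact swap_apply_of_ne_of_ne (fun hba => hne (h.apply_eq_comm.mp hba)) (h.2 b)

theorem swap_conj_apply_right (h : π.IsFixedPointFreeInvolution) (hne : π a ≠ b) :
    (swap a b * π * swap a b) b = π a := by
  rw [mul_apply, mul_apply, swap_apply_right]
  exact swap_apply_of_ne_of_ne (h.2 a) hne

end IsFixedPointFreeInvolution

theorem isFixedPointFreeInvolution_swap_mul_ofSubtype [DecidableEq α] {a b : α} (hab : a ≠ b)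
    {σ : Perm {x // x ≠ a ∧ x ≠ b}} (hσ : σ.IsFixedPointFreeInvolution) :
    (swap a b * ofSubtype σ).IsFixedPointFreeInvolution := by
  have hdisj : (swap a b).Disjoint (ofSubtype σ) := fun x => by
    by_cases hx : x ≠ a ∧ x ≠ b
    · exact .inl (swap_apply_of_ne_of_ne hx.1 hx.2)
    · exact .inr (ofSubtype_apply_of_not_mem σ hx)
  refine ⟨?_, fun x => ?_⟩
  · calc swap a b * ofSubtype σ * (swap a b * ofSubtype σ)
        = swap a b * swap a b * ofSubtype (σ * σ) := by
          rw [map_mul, mul_assoc, ← mul_assoc (ofSubtype σ), hdisj.commute.eq.symm]; group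
      _ = 1 := by rw [hσ.1, map_one, swap_mul_self, one_mul]
  · by_cases hx : x ≠ a ∧ x ≠ b
    · rw [mul_apply, ofSubtype_apply_of_mem σ hx, swap_apply_of_ne_of_ne (σ ⟨x, hx⟩).2.1
        (σ ⟨x, hx⟩).2.2]
      exact fun h => hσ.2 ⟨x, hx⟩ (Subtype.ext h)
    · rw [mul_apply, ofSubtype_apply_of_not_mem σ hx]
      obtain rfl | rfl : x = a ∨ x = b := by tauto
      · simpa using hab.symm
      · simpa using hab

variable [Fintype α]

section DecidableEq

variable [DecidableEq α]

instance : DecidablePred (IsFixedPointFreeInvolution : Perm α → Prop) := fun π => by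
  unfold IsFixedPointFreeInvolution; infer_instance

variable (α) in
def fixedPointFreeInvolutions : Finset (Perm α) :=
  univ.filter IsFixedPointFreeInvolution

@[simp]
theorem mem_fixedPointFreeInvolutions {π : Perm α} :
    π ∈ fixedPointFreeInvolutions α ↔ π.IsFixedPointFreeInvolution := by
  simp [fixedPointFreeInvolutions]

theorem card_filter_apply_eq_card_subtype {a b : α} (hab : a ≠ b) :
    #{π ∈ fixedPointFreeInvolutions α | π a = b} =
      #(fixedPointFreeInvolutions {x // x ≠ a ∧ x ≠ b}) := by
  have hpres : ∀ π ∈ {π ∈ fixedPointFreeInvolutions α | π a = b},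
      ∀ x, (π x ≠ a ∧ π x ≠ b ↔ x ≠ a ∧ x ≠ b) := by
    intro π hπ x
    obtain ⟨h, hπab⟩ : π.IsFixedPointFreeInvolution ∧ π a = b := by simpa using hπ
    have hπba : π b = a := h.apply_eq_comm.mp hπab
    rw [ne_eq, ne_eq, h.apply_eq_comm (y := a), h.apply_eq_comm (y := b), hπab, hπba]
    constructor <;> exact fun hx => ⟨Ne.symm hx.2, Ne.symm hx.1⟩
  refine card_bij' (fun π hπ => π.subtypePerm (hpres π hπ))
    (fun σ _ => swap a b * ofSubtype σ) ?_ ?_ ?_ ?_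
  · intro π hπ
    obtain ⟨h, -⟩ : π.IsFixedPointFreeInvolution ∧ π a = b := by simpa using hπ
    refine mem_fixedPointFreeInvolutions.mpr ⟨?_, fun x hx => h.2 x (congrArg Subtype.val hx)⟩
    ext x
    simp [h.apply_apply]
  · intro σ hσ
    have hσ' := mem_fixedPointFreeInvolutions.mp hσ
    simp [isFixedPointFreeInvolution_swap_mul_ofSubtype hab hσ', ofSubtype_apply_of_not_mem]
  · intro π hπ
    obtain ⟨h, hπab⟩ : π.IsFixedPointFreeInvolution ∧ π a = b := by simpa using hπ
    ext x
    by_cases hx : x ≠ a ∧ x ≠ b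
    · rw [mul_apply, ofSubtype_apply_of_mem (π.subtypePerm _) hx, subtypePerm_apply,
        swap_apply_of_ne_of_ne ((hpres π hπ x).mpr hx).1 ((hpres π hπ x).mpr hx).2]
    · obtain rfl | rfl : x = a ∨ x = b := by tauto
      · simp [ofSubtype_apply_of_not_mem, hπab]
      · simp [ofSubtype_apply_of_not_mem, h.apply_eq_comm.mp hπab]
  · intro σ hσ
    ext x
    simp [swap_apply_of_ne_of_ne (σ x).2.1 (σ x).2.2]

theorem card_fixedPointFreeInvolutions {n : ℕ} (h : Fintype.card α = 2 * n) :
    #(fixedPointFreeInvolutions α) = doubleFac n := by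
  induction n generalizing α with
  | zero =>
    have : IsEmpty α := Fintype.card_eq_zero_iff.mp h
    have hone : (1 : Perm α).IsFixedPointFreeInvolution := ⟨mul_one 1, isEmptyElim⟩
    simp [fixedPointFreeInvolutions, filter_singleton, hone, doubleFac]
  | succ n ih =>
    obtain ⟨a⟩ : Nonempty α := Fintype.card_pos_iff.mp (by omega)
    have hfiber : ∀ b ∈ univ.erase a, #{π ∈ fixedPointFreeInvolutions α | π a = b} = doubleFac n :=
      fun b hb => (card_filter_apply_eq_card_subtype (ne_of_mem_erase hb).symm).trans
        (ih (by rw [Fintype.card_subtype_ne_and_ne (ne_of_mem_erase hb).symm]; omega))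
    rw [card_eq_sum_card_fiberwise (f := fun π => π a) (t := univ.erase a)
        fun π hπ => by simpa using (mem_fixedPointFreeInvolutions.mp hπ).2 a,
      sum_congr rfl hfiber, sum_const, card_erase_of_mem (mem_univ a), card_univ, h,
      doubleFac_succ, smul_eq_mul]
    congr 1

theorem card_filter_apply_eq {n : ℕ} (h : Fintype.card α = 2 * n + 2) {a b : α} (hab : a ≠ b) :
    #{π ∈ fixedPointFreeInvolutions α | π a = b} = doubleFac n :=
  (card_filter_apply_eq_card_subtype hab).trans
    (card_fixedPointFreeInvolutions (by rw [Fintype.card_subtype_ne_and_ne hab]; omega))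

end DecidableEq

variable [LinearOrder α] in
theorem two_mul_card_filter_apply_lt_apply {a b : α} (hab : a < b) :
    2 * #{π ∈ fixedPointFreeInvolutions α | π b < π a} =
      #(fixedPointFreeInvolutions α) + #{π ∈ fixedPointFreeInvolutions α | π a = b} := by
  set M := fixedPointFreeInvolutions α
  set D := M.filter fun π => π b < π a
  have hpair : D.filter (fun π => π a = b) = M.filter (fun π => π a = b) := by
    ext π
    simp only [D, mem_filter, and_assoc, and_congr_right_iff, and_iff_right_iff_imp]
    intro hM hπab
    have h := mem_fixedPointFreeInvolutions.mp hM
    simpa [hπab, h.apply_eq_comm.mp hπab] using hab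
  have hswap : #(D.filter fun π => ¬π a = b) = #(M.filter fun π => ¬π b < π a) := by
    refine card_nbij' (fun π => swap a b * π * swap a b) (fun π => swap a b * π * swap a b)
      ?_ ?_ ?_ ?_
    · intro π hπ
      obtain ⟨⟨h, hdesc⟩, hne⟩ : (π.IsFixedPointFreeInvolution ∧ π b < π a) ∧ ¬π a = b := by
        simpa [D, M] using hπ
      simpa [M, h.swap_conj, h.swap_conj_apply_left hne, h.swap_conj_apply_right hne]
        using hdesc.le
    · intro π hπ
      obtain ⟨h, hasc⟩ : π.IsFixedPointFreeInvolution ∧ π a ≤ π b := by simpa [M] using hπ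
      have hne : π a ≠ b := fun hπab => by
        simp [hπab, h.apply_eq_comm.mp hπab] at hasc
        exact absurd hab hasc.not_gt
      have hlt : π a < π b := hasc.lt_of_ne (π.injective.ne hab.ne)
      simp [D, M, h.swap_conj, h.swap_conj_apply_left hne, h.swap_conj_apply_right hne, hlt, h.2 b]
    all_goals intro π _; simp [← mul_assoc]
  have hsplitD := card_filter_add_card_filter_not (s := D) (fun π => π a = b)
  have hsplitM := card_filter_add_card_filter_not (s := M) (fun π => π b < π a)
  change 2 * #D = #M + #(M.filter fun π => π a = b)
  change #D + _ = #M at hsplitM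
  rw [hpair] at hsplitD
  omega

end Equiv.Perm

theorem matchings_eq_fixedPointFreeInvolutions (n : ℕ) :
    matchings n = Equiv.Perm.fixedPointFreeInvolutions (Fin (2 * n)) := by
  ext π
  simp [matchings, IsMatching, Equiv.Perm.IsFixedPointFreeInvolution]

open Equiv.Perm in
theorem stmt2 (n : ℕ) (i : ℕ) (h1 : 1 ≤ i) (h2 : i ≤ 2 * n - 1) :
    ((matchings n).filter fun π =>
        π ⟨i, by omega⟩ < π ⟨i - 1, by omega⟩).card = n * doubleFac (n - 1) := by
  obtain ⟨k, rfl⟩ : ∃ k, n = k + 1 := ⟨n - 1, by omega⟩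
  have hlt : (⟨i - 1, by omega⟩ : Fin (2 * (k + 1))) < ⟨i, by omega⟩ := Fin.mk_lt_mk.mpr (by omega)
  have hcount := two_mul_card_filter_apply_lt_apply hlt
  rw [card_fixedPointFreeInvolutions (Fintype.card_fin _),
    card_filter_apply_eq (by rw [Fintype.card_fin]; ring) hlt.ne, doubleFac_succ,
    ← matchings_eq_fixedPointFreeInvolutions] at hcount
  rw [Nat.add_sub_cancel]
  apply Nat.eq_of_mul_eq_mul_left two_pos
  rw [hcount]
  ring
end

section
/- If \pi is chosen uniformly at random from the matchings in S_{2n}, then the expected value of the descent number d(\pi) = |Des(\pi)| + 1 is n + 1. -/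
open Finset

/-!
Conjugation by the transposition `(i k)` preserves matchings, and on the matchings in which `i`
is not matched to `k` it exchanges the values at `i` and `k`. So for `i < k` the matchings with
`π k < π i` are half of those in which `i` is not matched to `k`, plus all those in which it is.
Conjugation by transpositions also shows that `π i` is equidistributed on the other `m - 1`
points, so `i` is matched to `k` in a `1/(m-1)` fraction of the matchings. Each of the `2n - 1`
positions `i` with `i + 1 < 2n` is therefore a descent with probability
`(1 + 1/(2n-1))/2 = n/(2n-1)`, and linearity of expectation gives `E|Des(π)| = n`.
-/

open Equiv

namespace IsMatching

variable {m : ℕ} {π : Perm (Fin m)}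

lemma apply_apply (h : IsMatching π) (i : Fin m) : π (π i) = i := by
  simpa using Perm.ext_iff.mp h.1 i

lemma apply_ne_of_apply_ne (h : IsMatching π) {i k : Fin m} (hik : π i ≠ k) : π k ≠ i :=
  fun hki => hik (hki ▸ h.apply_apply k)

lemma conj (h : IsMatching π) (σ : Perm (Fin m)) : IsMatching (σ * π * σ⁻¹) := by
  refine ⟨?_, fun i hi => h.2 _ ((Perm.eq_inv_iff_eq (f := σ)).mpr hi)⟩
  rw [show σ * π * σ⁻¹ * (σ * π * σ⁻¹) = σ * (π * π) * σ⁻¹ by group, h.1]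
  group

lemma swap_conj_apply_left (h : IsMatching π) {a b : Fin m} (hab : π a ≠ b) :
    (swap a b * π * swap a b) a = π b := by
  simp [Perm.mul_apply, swap_apply_of_ne_of_ne (h.apply_ne_of_apply_ne hab) (h.2 b)]

lemma swap_conj_apply_right (h : IsMatching π) {a b : Fin m} (hab : π a ≠ b) :
    (swap a b * π * swap a b) b = π a := by
  simp [Perm.mul_apply, swap_apply_of_ne_of_ne (h.2 a) hab]

end IsMatching

lemma isMatching_revPerm (n : ℕ) : IsMatching (Fin.revPerm : Perm (Fin (2 * n))) := by
  refine ⟨by ext; simp, fun i hi => ?_⟩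
  have := congr_arg Fin.val hi
  simp only [Fin.revPerm_apply, Fin.val_rev] at this
  omega

section Counting

variable {m : ℕ}

lemma card_isMatching_congr_swap_conj (a b : Fin m) {p q : Perm (Fin m) → Prop}
    [DecidablePred p] [DecidablePred q]
    (hpq : ∀ π, IsMatching π → p π → q (swap a b * π * swap a b))
    (hqp : ∀ π, IsMatching π → q π → p (swap a b * π * swap a b)) :
    #{π | IsMatching π ∧ p π} = #{π | IsMatching π ∧ q π} := by
  have hconj {π : Perm (Fin m)} (h : IsMatching π) : IsMatching (swap a b * π * swap a b) := by
    simpa using h.conj (swap a b)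
  have hinv (π : Perm (Fin m)) : swap a b * (swap a b * π * swap a b) * swap a b = π := by
    simp [mul_assoc]
  refine card_nbij' (fun π => swap a b * π * swap a b) (fun π => swap a b * π * swap a b)
    ?_ ?_ (fun π _ => hinv π) (fun π _ => hinv π)
  · intro π hπ
    simp only [coe_filter, mem_univ, true_and, Set.mem_ofPred_eq] at hπ ⊢
    exact ⟨hconj hπ.1, hpq π hπ.1 hπ.2⟩
  · intro π hπ
    simp only [coe_filter, mem_univ, true_and, Set.mem_ofPred_eq] at hπ ⊢
    exact ⟨hconj hπ.1, hqp π hπ.1 hπ.2⟩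

lemma card_isMatching_apply_eq_congr {i j j' : Fin m} (hj : j ≠ i) (hj' : j' ≠ i) :
    #{π | IsMatching π ∧ π i = j} = #{π | IsMatching π ∧ π i = j'} := by
  have hi : swap j j' i = i := swap_apply_of_ne_of_ne hj.symm hj'.symm
  refine card_isMatching_congr_swap_conj j j' ?_ ?_ <;> intro π _ hπ <;>
    simp [Perm.mul_apply, hi, hπ]

lemma card_isMatching_eq_mul {i j : Fin m} (hij : i ≠ j) :
    #{π : Perm (Fin m) | IsMatching π} = (m - 1) * #{π | IsMatching π ∧ π i = j} := by
  rw [card_eq_sum_card_fiberwise (f := fun π => π i) (t := univ.erase i)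
    fun π hπ => mem_erase.mpr ⟨(mem_filter.mp hπ).2.2 i, mem_univ _⟩]
  simp only [filter_filter]
  rw [sum_congr rfl fun j' hj' => card_isMatching_apply_eq_congr (ne_of_mem_erase hj') hij.symm,
    sum_const, card_erase_of_mem (mem_univ i), card_univ, Fintype.card_fin, smul_eq_mul]

lemma two_mul_card_isMatching_lt {i k : Fin m} (hik : i < k) :
    2 * #{π : Perm (Fin m) | IsMatching π ∧ π k < π i}
      = #{π : Perm (Fin m) | IsMatching π} + #{π : Perm (Fin m) | IsMatching π ∧ π i = k} := by
  have hswap : #{π : Perm (Fin m) | IsMatching π ∧ (π i ≠ k ∧ π k < π i)}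
      = #{π : Perm (Fin m) | IsMatching π ∧ (π i ≠ k ∧ π i < π k)} := by
    refine card_isMatching_congr_swap_conj i k ?_ ?_ <;> rintro π h ⟨hne, hlt⟩ <;>
      rw [h.swap_conj_apply_left hne, h.swap_conj_apply_right hne] <;>
      exact ⟨h.2 k, hlt⟩
  have hA : #{π : Perm (Fin m) | IsMatching π ∧ π k < π i}
      = #{π : Perm (Fin m) | IsMatching π ∧ π i = k}
        + #{π : Perm (Fin m) | IsMatching π ∧ (π i ≠ k ∧ π k < π i)} := by
    -- a matching with `π i = k` has `π k = i < k = π i`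
    rw [← card_union_of_disjoint (disjoint_filter.mpr fun π _ h1 h2 => h2.2.1 h1.2)]
    congr 1
    ext π
    simp only [mem_filter, mem_univ, true_and, mem_union]
    grind [IsMatching.apply_apply]
  have hM : #{π : Perm (Fin m) | IsMatching π}
      = #{π : Perm (Fin m) | IsMatching π ∧ π k < π i}
        + #{π : Perm (Fin m) | IsMatching π ∧ (π i ≠ k ∧ π i < π k)} := by
    rw [← card_union_of_disjoint (disjoint_filter.mpr fun π _ h1 h2 => h2.2.2.not_gt h1.2)]
    congr 1
    ext π
    simp only [mem_filter, mem_univ, true_and, mem_union]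
    grind [IsMatching.apply_apply]
  omega

lemma sub_one_mul_two_mul_card_isMatching_lt {i k : Fin m} (hik : i < k) :
    (m - 1) * (2 * #{π : Perm (Fin m) | IsMatching π ∧ π k < π i})
      = m * #{π : Perm (Fin m) | IsMatching π} := by
  rw [two_mul_card_isMatching_lt hik, mul_add, ← card_isMatching_eq_mul hik.ne]
  obtain _ | m := m
  · exact k.elim0
  · rw [Nat.add_sub_cancel, Nat.succ_mul]

lemma card_desSet {k : ℕ} (π : Perm (Fin (k + 1))) :
    #(desSet π) = #{i : Fin k | π i.succ < π i.castSucc} := by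
  rw [desSet, card_filter, Fin.sum_univ_castSucc, card_filter]
  simp [Fin.succ]

lemma sum_card_desSet {k : ℕ} (s : Finset (Perm (Fin (k + 1)))) :
    ∑ π ∈ s, #(desSet π) = ∑ i : Fin k, #{π ∈ s | π i.succ < π i.castSucc} := by
  simp only [card_desSet, card_filter]
  exact sum_comm

lemma two_mul_sum_card_desSet_isMatching (m : ℕ) :
    2 * ∑ π ∈ {π : Perm (Fin m) | IsMatching π}, #(desSet π)
      = m * #{π : Perm (Fin m) | IsMatching π} := by
  obtain _ | _ | k := m
  · simp [desSet]
  · have h (π : Perm (Fin 1)) : ¬IsMatching π := fun h => h.2 0 (Subsingleton.elim _ _)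
    simp [h]
  · refine Nat.eq_of_mul_eq_mul_left k.succ_pos ?_
    calc (k + 1) * (2 * ∑ π ∈ {π : Perm (Fin (k + 2)) | IsMatching π}, #(desSet π))
        = ∑ i : Fin (k + 1), (k + 1) *
            (2 * #{π : Perm (Fin (k + 2)) | IsMatching π ∧ π i.succ < π i.castSucc}) := by
          simp only [sum_card_desSet, filter_filter, mul_sum]
      _ = ∑ i : Fin (k + 1), (k + 2) * #{π : Perm (Fin (k + 2)) | IsMatching π} :=
          sum_congr rfl fun i _ => sub_one_mul_two_mul_card_isMatching_lt i.castSucc_lt_succ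
      _ = (k + 1) * ((k + 2) * #{π : Perm (Fin (k + 2)) | IsMatching π}) := by simp

theorem stmt3_general (n : ℕ) :
    (∑ π ∈ matchings n, (desNum π : ℚ)) / (matchings n).card = n + 1 := by
  have hM : ((matchings n).card : ℚ) ≠ 0 :=
    Nat.cast_ne_zero.mpr (card_ne_zero_of_mem (mem_filter.mpr ⟨mem_univ _, isMatching_revPerm n⟩))
  have hdes : ∑ π ∈ matchings n, #(desSet π) = n * #(matchings n) := by
    have h := two_mul_sum_card_desSet_isMatching (2 * n)
    rw [mul_assoc] at h
    exact Nat.eq_of_mul_eq_mul_left two_pos h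
  calc (∑ π ∈ matchings n, (desNum π : ℚ)) / (matchings n).card
      = ((n + 1) * (matchings n).card) / (matchings n).card := by
        simp only [desNum, Nat.cast_add, Nat.cast_one, sum_add_distrib, ← Nat.cast_sum, hdes,
          sum_const, nsmul_eq_mul, Nat.cast_mul, mul_one]
        ring
    _ = n + 1 := mul_div_cancel_right₀ _ hM

theorem stmt3 (n : ℕ) (hn : 1 ≤ n) :
    (∑ π ∈ matchings n, (desNum π : ℚ)) / (matchings n).card = n + 1 :=
  stmt3_general n
end Counting
end

section
/- For every real s > 0 and natural number n \geq 1, \frac{(s/\sqrt{n})^{2n+1}}{(2n)!} \sum_{k=0}^\infty \big( \prod_{j=0}^{n-1} (k^2 + k + 2j) \big) e^{-ks/\sqrt{n}} \geq e^{-s/\sqrt{n}}. -/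
/-!
With `x = s / √n`, every factor `k² + k + 2j` is at least `k²`, so the series dominates
`∑ k^(2n) e^(-kx)`. On `(k, k + 1]` the integrand `t^(2n) e^(-xt)` is at most
`(k + 1)^(2n) e^(-xk)`, hence `e^(-x) ∫₀^∞ t^(2n) e^(-xt) dt = e^(-x) (2n)! / x^(2n+1)`
is at most `∑_{k ≥ 1} k^(2n) e^(-kx)`.
-/

open Finset

open MeasureTheory Real

section

variable {α : Type*} [Field α] [LinearOrder α] [IsStrictOrderedRing α]

theorem iUnion_Ioc_natCast [FloorSemiring α] :
    ⋃ k : ℕ, Set.Ioc (k : α) (k + 1) = Set.Ioi 0 := by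
  ext t
  simp only [Set.mem_iUnion, Set.mem_Ioc, Set.mem_Ioi]
  refine ⟨fun ⟨k, hk, _⟩ => k.cast_nonneg.trans_lt hk, fun ht => ⟨⌈t⌉₊ - 1, ?_, ?_⟩⟩
  · have h1 : 1 ≤ ⌈t⌉₊ := Nat.one_le_ceil_iff.mpr ht
    by_contra! h
    have := Nat.ceil_le.mpr h
    omega
  · rw [Nat.cast_pred (Nat.ceil_pos.mpr ht), sub_add_cancel]
    exact Nat.le_ceil t

variable (α) in
theorem pairwise_disjoint_Ioc_natCast :
    Pairwise (Function.onFun Disjoint fun k : ℕ => Set.Ioc (k : α) (k + 1)) := by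
  intro i j hij
  simpa using Set.pairwise_disjoint_Ioc_intCast α (Nat.cast_injective.ne hij : (i : ℤ) ≠ j)

end

theorem MeasureTheory.IntegrableOn.hasSum_setIntegral_Ioc_natCast {E : Type*}
    [NormedAddCommGroup E] [NormedSpace ℝ E] {f : ℝ → E} (hf : IntegrableOn f (Set.Ioi 0)) :
    HasSum (fun k : ℕ => ∫ t in Set.Ioc (k : ℝ) (k + 1), f t) (∫ t in Set.Ioi 0, f t) := by
  rw [← iUnion_Ioc_natCast] at hf ⊢
  exact hasSum_integral_iUnion (fun _ => measurableSet_Ioc) (pairwise_disjoint_Ioc_natCast ℝ) hf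

theorem integral_pow_mul_exp_neg_mul_Ioi (m : ℕ) {x : ℝ} (hx : 0 < x) :
    ∫ t in Set.Ioi 0, t ^ m * exp (-(x * t)) = m.factorial / x ^ (m + 1) := by
  have := integral_rpow_mul_exp_neg_mul_Ioi (a := m + 1) (by positivity) hx
  simp only [add_sub_cancel_right, rpow_natCast, Gamma_nat_eq_factorial] at this
  rw [this, ← Nat.cast_succ, rpow_natCast, one_div, inv_pow, inv_mul_eq_div]

theorem setIntegral_Ioc_pow_mul_exp_neg_mul_le (m : ℕ) {x a : ℝ} (hx : 0 ≤ x) (ha : 0 ≤ a) :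
    ∫ t in Set.Ioc a (a + 1), t ^ m * exp (-(x * t)) ≤ (a + 1) ^ m * exp (-(x * a)) := by
  calc ∫ t in Set.Ioc a (a + 1), t ^ m * exp (-(x * t))
      ≤ ∫ _ in Set.Ioc a (a + 1), (a + 1) ^ m * exp (-(x * a)) := by
        refine setIntegral_mono_on (Continuous.integrableOn_Ioc (by fun_prop))
          (integrableOn_const (by simp)) measurableSet_Ioc fun t ⟨hat, hta⟩ => ?_
        gcongr
        exact ha.trans hat.le
    _ = (a + 1) ^ m * exp (-(x * a)) := by simp

theorem summable_add_pow_mul_exp_neg_nat_mul (c m : ℕ) {x : ℝ} (hx : 0 < x) :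
    Summable fun k : ℕ => ((k : ℝ) + c) ^ m * exp (-x * k) := by
  have := ((summable_nat_add_iff c).mpr (summable_pow_mul_exp_neg_nat_mul m hx)).mul_left
    (exp (x * c))
  refine this.congr fun k => ?_
  rw [mul_left_comm, ← exp_add]
  push_cast
  ring_nf

theorem exp_neg_mul_factorial_div_pow_le_tsum (m : ℕ) {x : ℝ} (hx : 0 < x) :
    exp (-x) * (m.factorial / x ^ (m + 1)) ≤ ∑' k : ℕ, (k : ℝ) ^ m * exp (-x * k) := by
  -- a non-integrable function would have integral `0`
  have hf : IntegrableOn (fun t => t ^ m * exp (-(x * t))) (Set.Ioi 0) :=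
    Integrable.of_integral_ne_zero <| by
      rw [integral_pow_mul_exp_neg_mul_Ioi m hx]
      positivity
  have hsum := hf.hasSum_setIntegral_Ioc_natCast.mul_left (exp (-x))
  rw [integral_pow_mul_exp_neg_mul_Ioi m hx] at hsum
  rw [← hsum.tsum_eq]
  refine hsum.summable.tsum_le_tsum_of_inj (· + 1) (add_left_injective 1)
    (fun _ _ => by positivity) (fun k => ?_) (summable_pow_mul_exp_neg_nat_mul m hx)
  calc exp (-x) * ∫ t in Set.Ioc (k : ℝ) (k + 1), t ^ m * exp (-(x * t))
      ≤ exp (-x) * (((k : ℝ) + 1) ^ m * exp (-(x * k))) := by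
        gcongr
        exact setIntegral_Ioc_pow_mul_exp_neg_mul_le m hx.le k.cast_nonneg
    _ = ((k + 1 : ℕ) : ℝ) ^ m * exp (-x * (k + 1 : ℕ)) := by
        rw [mul_left_comm, ← exp_add]
        push_cast
        ring_nf

theorem pow_two_mul_le_prod_range {k : ℝ} (hk : 0 ≤ k) (n : ℕ) :
    k ^ (2 * n) ≤ ∏ j ∈ range n, (k ^ 2 + k + 2 * j) := by
  calc k ^ (2 * n) = ∏ _j ∈ range n, k ^ 2 := by rw [prod_const, card_range, pow_mul]
    _ ≤ ∏ j ∈ range n, (k ^ 2 + k + 2 * j) :=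
      prod_le_prod (fun _ _ => by positivity) fun j _ => by
        have : (0 : ℝ) ≤ j := j.cast_nonneg
        linarith

theorem prod_range_le_add_pow {k : ℝ} (hk : 0 ≤ k) (n : ℕ) :
    ∏ j ∈ range n, (k ^ 2 + k + 2 * j) ≤ (k + n) ^ (2 * n) := by
  calc ∏ j ∈ range n, (k ^ 2 + k + 2 * j) ≤ ∏ _j ∈ range n, (k + n) ^ 2 :=
      prod_le_prod (fun _ _ => by positivity) fun j hj => by
        have hjn : (j : ℝ) + 1 ≤ n := by exact_mod_cast mem_range.mp hj
        nlinarith [j.cast_nonneg (α := ℝ)]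
    _ = (k + n) ^ (2 * n) := by rw [prod_const, card_range, pow_mul]

theorem summable_prod_range_mul_exp_neg_nat_mul (n : ℕ) {x : ℝ} (hx : 0 < x) :
    Summable fun k : ℕ => (∏ j ∈ range n, ((k : ℝ) ^ 2 + k + 2 * j)) * exp (-x * k) :=
  (summable_add_pow_mul_exp_neg_nat_mul n (2 * n) hx).of_nonneg_of_le
    (fun k => by positivity) fun k => by
      gcongr
      exact prod_range_le_add_pow k.cast_nonneg n

theorem stmt15 (n : ℕ) (hn : 1 ≤ n) (s : ℝ) (hs : 0 < s) :
    (s / Real.sqrt n) ^ (2 * n + 1) / (Nat.factorial (2 * n) : ℝ)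
        * ∑' k : ℕ, (∏ j ∈ Finset.range n, ((k : ℝ) ^ 2 + k + 2 * j))
            * Real.exp (-(k * s) / Real.sqrt n)
      ≥ Real.exp (-s / Real.sqrt n) := by
  set x := s / Real.sqrt n
  have hx : 0 < x := div_pos hs (Real.sqrt_pos.mpr (by exact_mod_cast hn))
  have hexp : ∀ k : ℕ, -(k * s) / Real.sqrt n = -x * k := fun k => by ring
  simp only [hexp, neg_div]
  calc exp (-x)
      = x ^ (2 * n + 1) / (2 * n).factorial
          * (exp (-x) * ((2 * n).factorial / x ^ (2 * n + 1))) := by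
        field_simp
    _ ≤ x ^ (2 * n + 1) / (2 * n).factorial
          * ∑' k : ℕ, (k : ℝ) ^ (2 * n) * exp (-x * k) := by
        gcongr
        exact exp_neg_mul_factorial_div_pow_le_tsum (2 * n) hx
    _ ≤ x ^ (2 * n + 1) / (2 * n).factorial
          * ∑' k : ℕ, (∏ j ∈ range n, ((k : ℝ) ^ 2 + k + 2 * j)) * exp (-x * k) := by
        refine mul_le_mul_of_nonneg_left ?_ (by positivity)
        exact (summable_pow_mul_exp_neg_nat_mul _ hx).tsum_le_tsum
          (fun k => by gcongr; exact pow_two_mul_le_prod_range k.cast_nonneg n)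
          (summable_prod_range_mul_exp_neg_nat_mul n hx)
end
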